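/- Shift-invariance of Padé solutions under adding a codeword: fix positive integers s ≤ ℓ, τ and the interleaved Reed–Solomon setup. Suppose ((λ_i)_{|i|<s}, (ψ_j)_{1≤|j|≤ℓ}) are polynomials satisfying, for all j with 1 ≤ |j| ≤ ℓ: Σ_{i ⪯ j, |i| < s} λ_i·C(j,i)·R^{j-i}·G^{|i|} ≡ ψ_j (mod G_j) and deg ψ_j < τs + |j|(k-1) + 1, where G_j := x^{τs+|j|(n-1)+1} for |j| < s and G_j := G^s for |j| ≥ s. Let f̂ = (f̂_1,...,f̂_m) ∈ F[x]^m with deg f̂_t < k, set R̂ := R + f̂ (componentwise), define ψ_0 := λ_0 (the λ indexed by the zero multi-index), and define ψ̂_j := Σ_{h ⪯ j} C(j,h)·f̂^h·ψ_{j-h}. Then for all j with 1 ≤ |j| ≤ ℓ: Σ_{i ⪯ j, |i| < s} λ_i·C(j,i)·R̂^{j-i}·G^{|i|} ≡ ψ̂_j (mod G_j) and deg ψ̂_j < τs + |j|(k-1) + 1. -/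

import Mathlib

/-!
Write `S_R(u) = ∑_{i ⪯ u, |i| < s} λ_i C(u,i) R^{u-i} G^{|i|}`. Expanding `(R + f̂)^{j-i}`
multinomially and exchanging the two sums gives `S_{R+f̂}(j) = ∑_{h ⪯ j} C(j,h) f̂^h S_R(j-h)`,
hence `S_{R+f̂}(j) - ψ̂_j = ∑_{h ⪯ j} C(j,h) f̂^h (S_R(j-h) - ψ_{j-h})`. A summand with
`|j-h| ≥ s` is divisible by `G^s`. A summand with `|j-h| < s` vanishes: `S_R(0) = λ_0 = ψ_0`,
and for `u ≠ 0` both `S_R(u)` and `ψ_u` have degree at most `τs + |u|(n-1)` while their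
difference is divisible by `x^{τs+|u|(n-1)+1}`. The degree bound on `ψ̂_j` is additive:
`deg f̂^h ≤ |h|(k-1)` and `deg ψ_{j-h} ≤ τs + |j-h|(k-1)`.
-/

open Polynomial Finset

theorem Nat.choose_mul_choose_sub_comm (n a b : ℕ) :
    n.choose a * (n - a).choose b = n.choose b * (n - b).choose a := by
  have h₁ := Nat.choose_mul (n := n) (Nat.le_add_right a b)
  have h₂ := Nat.choose_mul (n := n) (Nat.le_add_right b a)
  rw [Nat.add_sub_cancel_left] at h₁ h₂
  rw [← h₁, ← h₂, add_comm b a, Nat.choose_symm_add]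

theorem Polynomial.natDegree_sum_lt_of_forall_ne_zero {R κ : Type*} [Semiring R] {s : Finset κ}
    {f : κ → R[X]} {b : ℤ} (hf : ∀ i ∈ s, f i ≠ 0 → ((f i).natDegree : ℤ) < b)
    (hs : ∑ i ∈ s, f i ≠ 0) : ((∑ i ∈ s, f i).natDegree : ℤ) < b := by
  obtain ⟨i₀, hi₀, hne⟩ := exists_ne_zero_of_sum_ne_zero hs
  lift b to ℕ using (Int.natCast_nonneg _).trans (hf i₀ hi₀ hne).le
  have : (∑ i ∈ s, f i).natDegree ≤ b - 1 := by
    refine natDegree_sum_le_of_forall_le _ _ fun i hi => ?_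
    by_cases h : f i = 0
    · simp [h]
    · have := hf i hi h
      omega
  have := hf i₀ hi₀ hne
  omega

theorem Polynomial.natDegree_le_pred_of_degree_lt {R : Type*} [Semiring R] {p : R[X]} {n : ℕ}
    (h : p.degree < n) : p.natDegree ≤ n - 1 := by
  rcases eq_or_ne p 0 with rfl | hp
  · simp
  · have := (natDegree_lt_iff_degree_lt hp).mpr h
    omega

section PolynomialDegree

variable {R : Type*} [CommRing R] [IsDomain R]

theorem Polynomial.eq_of_X_pow_dvd_sub {p q : R[X]} {D : ℕ} (hp : p.natDegree ≤ D)
    (hq : q.natDegree ≤ D) (h : X ^ (D + 1) ∣ p - q) : p = q := by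
  refine sub_eq_zero.mp (eq_zero_of_dvd_of_natDegree_lt h ?_)
  rw [natDegree_X_pow]
  exact Nat.lt_succ_of_le ((natDegree_sub_le p q).trans (max_le hp hq))

theorem Polynomial.natDegree_prod_pow_le_of_degree_lt {ι : Type*} [Fintype ι] {f : ι → R[X]}
    {k : ℕ} (hf : ∀ t, (f t).degree < k) {h : ι → ℕ} (hne : ∏ t, f t ^ h t ≠ 0) :
    ((∏ t, f t ^ h t).natDegree : ℤ) ≤ ((∑ t, h t : ℕ) : ℤ) * ((k : ℤ) - 1) := by
  have hfactor : ∀ t, ((f t ^ h t).natDegree : ℤ) ≤ h t * ((k : ℤ) - 1) := by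
    intro t
    rcases Nat.eq_zero_or_pos (h t) with h0 | hpos
    · simp [h0]
    have hft : f t ≠ 0 := fun h0 => hne (prod_eq_zero (mem_univ t) (by simp [h0, hpos.ne']))
    have : (f t).natDegree < k := (natDegree_lt_iff_degree_lt hft).mpr (hf t)
    rw [natDegree_pow, Nat.cast_mul]
    gcongr
    omega
  calc ((∏ t, f t ^ h t).natDegree : ℤ) ≤ ∑ t, ((f t ^ h t).natDegree : ℤ) := by
        exact_mod_cast natDegree_prod_le _ _
    _ ≤ ∑ t, (h t : ℤ) * ((k : ℤ) - 1) := sum_le_sum fun t _ => hfactor t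
    _ = ((∑ t, h t : ℕ) : ℤ) * ((k : ℤ) - 1) := by push_cast; rw [sum_mul]

end PolynomialDegree

section MultiIndex

variable {ι : Type*} [Fintype ι]

theorem prod_choose_mul_prod_choose_sub_comm (j a b : ι → ℕ) :
    (∏ t, (j t).choose (a t)) * ∏ t, (j t - a t).choose (b t) =
      (∏ t, (j t).choose (b t)) * ∏ t, (j t - b t).choose (a t) := by
  simp only [← prod_mul_distrib]
  exact prod_congr rfl fun t _ => Nat.choose_mul_choose_sub_comm _ _ _

theorem sum_add_sum_sub_of_le {i u : ι → ℕ} (h : i ≤ u) :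
    ∑ t, i t + ∑ t, (u - i) t = ∑ t, u t := by
  rw [← sum_add_distrib]
  exact sum_congr rfl fun t _ => Nat.add_sub_cancel' (h t)

variable [DecidableEq ι]

theorem prod_add_pow_eq_sum_Iic {A : Type*} [CommSemiring A] (f g : ι → A) (u : ι → ℕ) :
    ∏ t, (f t + g t) ^ u t =
      ∑ h ∈ Iic u, ((∏ t, (u t).choose (h t) : ℕ) : A) * (∏ t, g t ^ h t) *
        ∏ t, f t ^ (u t - h t) := by
  have hcoord : ∀ t, (f t + g t) ^ u t =
      ∑ c ∈ Iic (u t), ((u t).choose c : A) * g t ^ c * f t ^ (u t - c) := by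
    intro t
    rw [add_comm, add_pow, Nat.range_succ_eq_Iic]
    exact sum_congr rfl fun c _ => by ring
  rw [prod_congr rfl fun t _ => hcoord t, prod_univ_sum]
  refine sum_congr rfl fun h _ => ?_
  rw [prod_mul_distrib, prod_mul_distrib, Nat.cast_prod]

theorem sum_Iic_sum_Iic_sub_comm {M : Type*} [AddCommMonoid M] (j : ι → ℕ)
    (f : (ι → ℕ) → (ι → ℕ) → M) :
    ∑ i ∈ Iic j, ∑ h ∈ Iic (j - i), f i h = ∑ h ∈ Iic j, ∑ i ∈ Iic (j - h), f i h := by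
  refine sum_comm' fun i h => ?_
  simp only [mem_Iic, Pi.le_def, Pi.sub_apply]
  constructor <;> rintro ⟨h₁, h₂⟩ <;> refine ⟨fun t => ?_, fun t => ?_⟩ <;>
    have := h₁ t <;> have := h₂ t <;> omega

variable {A : Type*} [CommSemiring A]

def binomialTransform (R : ι → A) (b : (ι → ℕ) → A) (u : ι → ℕ) : A :=
  ∑ i ∈ Iic u, ((∏ t, (u t).choose (i t) : ℕ) : A) * b i * ∏ t, R t ^ (u t - i t)

/-- `ψ̂_j` is `binomialShift f̂ ψ j`. -/
def binomialShift (f : ι → A) (a : (ι → ℕ) → A) (j : ι → ℕ) : A :=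
  ∑ h ∈ Iic j, ((∏ t, (j t).choose (h t) : ℕ) : A) * (∏ t, f t ^ h t) * a (j - h)

theorem dvd_binomialShift {M : A} (f : ι → A) {a : (ι → ℕ) → A} {j : ι → ℕ}
    (ha : ∀ h ∈ Iic j, M ∣ a (j - h)) : M ∣ binomialShift f a j :=
  dvd_sum fun h hh => dvd_mul_of_dvd_right (ha h hh) _

theorem binomialTransform_add (R f : ι → A) (b : (ι → ℕ) → A) :
    binomialTransform (R + f) b = binomialShift f (binomialTransform R b) := by
  funext j
  calc binomialTransform (R + f) b j
      = ∑ i ∈ Iic j, ∑ h ∈ Iic (j - i),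
          (((∏ t, (j t).choose (i t)) * ∏ t, (j t - i t).choose (h t) : ℕ) : A) *
            (∏ t, f t ^ h t) * b i * ∏ t, R t ^ (j t - i t - h t) := by
        refine sum_congr rfl fun i _ => ?_
        rw [Pi.add_def, prod_add_pow_eq_sum_Iic, mul_sum]
        refine sum_congr rfl fun h _ => ?_
        push_cast
        ring
    _ = ∑ h ∈ Iic j, ∑ i ∈ Iic (j - h),
          (((∏ t, (j t).choose (i t)) * ∏ t, (j t - i t).choose (h t) : ℕ) : A) *
            (∏ t, f t ^ h t) * b i * ∏ t, R t ^ (j t - i t - h t) :=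
        sum_Iic_sum_Iic_sub_comm j _
    _ = _ := by
        refine sum_congr rfl fun h _ => ?_
        rw [binomialTransform, mul_sum]
        refine sum_congr rfl fun i _ => ?_
        have hexp : ∏ t, R t ^ (j t - i t - h t) = ∏ t, R t ^ (j t - h t - i t) :=
          prod_congr rfl fun t _ => by rw [Nat.sub_right_comm]
        simp only [prod_choose_mul_prod_choose_sub_comm, Pi.sub_apply, hexp]
        push_cast
        ring

theorem binomialShift_sub {A : Type*} [CommRing A] (f : ι → A) (a b : (ι → ℕ) → A)
    (j : ι → ℕ) : binomialShift f a j - binomialShift f b j = binomialShift f (a - b) j := by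
  simp only [binomialShift, ← sum_sub_distrib, Pi.sub_apply, mul_sub]

theorem natDegree_binomialShift_lt {K : Type*} [CommRing K] [IsDomain K] {f : ι → K[X]}
    {k : ℕ} (hf : ∀ t, (f t).degree < k) {a : (ι → ℕ) → K[X]} {j : ι → ℕ} {b : ℤ}
    (ha : ∀ h ∈ Iic j, a (j - h) ≠ 0 →
      ((a (j - h)).natDegree : ℤ) ≤ b + ((∑ t, (j - h) t : ℕ) : ℤ) * ((k : ℤ) - 1))
    (hne : binomialShift f a j ≠ 0) :
    ((binomialShift f a j).natDegree : ℤ) < b + ((∑ t, j t : ℕ) : ℤ) * ((k : ℤ) - 1) + 1 := by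
  refine natDegree_sum_lt_of_forall_ne_zero (fun h hh h0 => ?_) hne
  have hf0 : ∏ t, f t ^ h t ≠ 0 := fun h' => h0 (by rw [h', mul_zero, zero_mul])
  have ha0 : a (j - h) ≠ 0 := fun h' => h0 (by rw [h', mul_zero])
  have hdeg : (((∏ t, (j t).choose (h t) : ℕ) : K[X]) * (∏ t, f t ^ h t) * a (j - h)).natDegree
      ≤ (∏ t, f t ^ h t).natDegree + (a (j - h)).natDegree := by
    refine natDegree_mul_le.trans (Nat.add_le_add_right (natDegree_mul_le.trans ?_) _)
    rw [natDegree_natCast, zero_add]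
  have hsum : ((∑ t, h t : ℕ) : ℤ) + ((∑ t, (j - h) t : ℕ) : ℤ) = ((∑ t, j t : ℕ) : ℤ) := by
    exact_mod_cast sum_add_sum_sub_of_le (mem_Iic.mp hh)
  have hdeg' := (Nat.cast_le (α := ℤ)).mpr hdeg
  rw [Nat.cast_add] at hdeg'
  linear_combination hdeg' + natDegree_prod_pow_le_of_degree_lt hf hf0 + ha h hh ha0 +
    ((k : ℤ) - 1) * hsum

end MultiIndex

section Pade

variable {ι : Type*} [Fintype ι] [DecidableEq ι]

/-- The left-hand side `S_R(u)` of the Padé congruence at `u`. -/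
def padeCombination {A : Type*} [CommSemiring A] (lam : (ι → ℕ) → A) (G : A) (s : ℕ)
    (R : ι → A) (u : ι → ℕ) : A :=
  ∑ i ∈ (Iic u).filter (fun i => ∑ t, i t < s),
    lam i * (((∏ t, (u t).choose (i t) : ℕ) : A) * (∏ t, R t ^ (u t - i t)) * G ^ (∑ t, i t))

section CommSemiring

variable {A : Type*} [CommSemiring A] (lam : (ι → ℕ) → A) (G : A) (s : ℕ) (R : ι → A)

theorem padeCombination_eq_binomialTransform :
    padeCombination lam G s R =
      binomialTransform R fun i => if ∑ t, i t < s then lam i * G ^ ∑ t, i t else 0 := by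
  funext u
  rw [padeCombination, binomialTransform, sum_filter]
  refine sum_congr rfl fun i _ => ?_
  split_ifs <;> ring

theorem padeCombination_add (f : ι → A) :
    padeCombination lam G s (R + f) = binomialShift f (padeCombination lam G s R) := by
  simp only [padeCombination_eq_binomialTransform, binomialTransform_add]

theorem padeCombination_zero {s : ℕ} (hs : 0 < s) : padeCombination lam G s R 0 = lam 0 := by
  have hIic : Iic (0 : ι → ℕ) = {0} := by
    ext i
    simp [funext_iff]
  rw [padeCombination, hIic, filter_singleton]
  simp [hs]

end CommSemiring

theorem natDegree_padeCombination_le {K : Type*} [CommSemiring K] {lam : (ι → ℕ) → K[X]}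
    {G : K[X]} {s : ℕ} {R : ι → K[X]} {d e : ℕ} (hG : G.natDegree ≤ e + 1)
    (hR : ∀ t, (R t).natDegree ≤ e)
    (hlam : ∀ i, ∑ t, i t < s → lam i ≠ 0 → (lam i).natDegree + ∑ t, i t ≤ d) (u : ι → ℕ) :
    (padeCombination lam G s R u).natDegree ≤ d + (∑ t, u t) * e := by
  refine natDegree_sum_le_of_forall_le _ _ fun i hi => ?_
  obtain ⟨hiu, his⟩ := mem_filter.mp hi
  by_cases hlam0 : lam i = 0
  · simp [hlam0]
  have hRprod : (∏ t, R t ^ (u t - i t)).natDegree ≤ ∑ t, (u - i) t * e :=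
    (natDegree_prod_le _ _).trans (sum_le_sum fun t _ => natDegree_pow_le_of_le _ (hR t))
  calc _ ≤ (lam i).natDegree + (0 + ∑ t, (u - i) t * e + (∑ t, i t) * (e + 1)) :=
        natDegree_mul_le_of_le le_rfl <| natDegree_mul_le_of_le
          (natDegree_mul_le_of_le (natDegree_natCast _).le hRprod) (natDegree_pow_le_of_le _ hG)
    _ = ((lam i).natDegree + ∑ t, i t) + (∑ t, i t + ∑ t, (u - i) t) * e := by
        rw [← sum_mul]; ring
    _ ≤ d + (∑ t, u t) * e := by
        rw [sum_add_sum_sub_of_le (mem_Iic.mp hiu)]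
        exact Nat.add_le_add_right (hlam i his hlam0) _

end Pade

theorem pade_solution_shift_invariance_general (F : Type*) [Field F]
    (n k m : ℕ) (hk : k < n)
    (α : Fin n → F)
    (G : Polynomial F) (hG : G = ∏ i : Fin n, (X - C (α i)))
    (R : Fin m → Polynomial F) (hRdeg : ∀ t, (R t).degree < (n : ℕ))
    (s ℓ τ : ℕ) (hs : 0 < s)
    (lam psi : (Fin m → ℕ) → Polynomial F)
    (hlamdeg : ∀ i : Fin m → ℕ, ∑ t, i t < s → lam i ≠ 0 →
      ((lam i).natDegree : ℤ) < (τ : ℤ) * s - (∑ t, i t) + 1)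
    (hcong : ∀ j : Fin m → ℕ, 1 ≤ ∑ t, j t → ∑ t, j t ≤ ℓ →
      (if (∑ t, j t) < s then (X : Polynomial F) ^ (τ * s + (∑ t, j t) * (n - 1) + 1)
        else G ^ s) ∣
        (∑ i ∈ (Finset.Iic j).filter (fun i => ∑ t, i t < s),
          lam i * (((∏ t, (j t).choose (i t) : ℕ) : Polynomial F) *
            (∏ t, R t ^ (j t - i t)) * G ^ (∑ t, i t)) - psi j))
    (hpsideg : ∀ j : Fin m → ℕ, 1 ≤ ∑ t, j t → ∑ t, j t ≤ ℓ → psi j ≠ 0 →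
      ((psi j).natDegree : ℤ) < (τ : ℤ) * s + (∑ t, j t) * ((k : ℤ) - 1) + 1)
    (fhat : Fin m → Polynomial F) (hfhat : ∀ t, (fhat t).degree < (k : ℕ))
    (hpsi0 : psi 0 = lam 0) :
    ∀ j : Fin m → ℕ, 1 ≤ ∑ t, j t → ∑ t, j t ≤ ℓ →
      ((if (∑ t, j t) < s then (X : Polynomial F) ^ (τ * s + (∑ t, j t) * (n - 1) + 1)
        else G ^ s) ∣
        (∑ i ∈ (Finset.Iic j).filter (fun i => ∑ t, i t < s),
          lam i * (((∏ t, (j t).choose (i t) : ℕ) : Polynomial F) *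
            (∏ t, (R t + fhat t) ^ (j t - i t)) * G ^ (∑ t, i t)) -
          ∑ h ∈ Finset.Iic j,
            ((∏ t, (j t).choose (h t) : ℕ) : Polynomial F) *
              (∏ t, fhat t ^ h t) * psi (j - h))) ∧
      ((∑ h ∈ Finset.Iic j,
          ((∏ t, (j t).choose (h t) : ℕ) : Polynomial F) *
            (∏ t, fhat t ^ h t) * psi (j - h)) ≠ 0 →
        (((∑ h ∈ Finset.Iic j,
            ((∏ t, (j t).choose (h t) : ℕ) : Polynomial F) *
              (∏ t, fhat t ^ h t) * psi (j - h)).natDegree : ℤ) <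
          (τ : ℤ) * s + (∑ t, j t) * ((k : ℤ) - 1) + 1)) := by
  have hGdeg : G.natDegree ≤ n - 1 + 1 := by
    simp only [hG, natDegree_finsetProd_X_sub_C_eq_card, card_univ, Fintype.card_fin]
    omega
  have hR t : (R t).natDegree ≤ n - 1 := natDegree_le_pred_of_degree_lt (hRdeg t)
  have hlam i (hi : ∑ t, i t < s) (h0 : lam i ≠ 0) : (lam i).natDegree + ∑ t, i t ≤ τ * s := by
    have := hlamdeg i hi h0
    omega
  have hψ u (hu : ∑ t, u t ≤ ℓ) (h0 : psi u ≠ 0) :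
      ((psi u).natDegree : ℤ) ≤ τ * s + ((∑ t, u t : ℕ) : ℤ) * ((k : ℤ) - 1) := by
    rcases Nat.eq_zero_or_pos (∑ t, u t) with hu0 | hu0
    · obtain rfl : u = 0 := funext fun t => sum_eq_zero_iff.mp hu0 t (mem_univ t)
      simpa [hpsi0, Int.lt_add_one_iff] using hlamdeg 0 (by simpa using hs) (hpsi0 ▸ h0)
    · linarith [hpsideg u hu0 hu h0]
  have hexact u (hus : ∑ t, u t < s) (hu : ∑ t, u t ≤ ℓ) :
      padeCombination lam G s R u = psi u := by
    rcases Nat.eq_zero_or_pos (∑ t, u t) with hu0 | hu0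
    · obtain rfl : u = 0 := funext fun t => sum_eq_zero_iff.mp hu0 t (mem_univ t)
      rw [padeCombination_zero _ _ _ hs, hpsi0]
    refine eq_of_X_pow_dvd_sub (natDegree_padeCombination_le hGdeg hR hlam u) ?_ ?_
    · rcases eq_or_ne (psi u) 0 with h0 | h0
      · simp [h0]
      have hkn : ((k : ℤ) - 1) ≤ ((n - 1 : ℕ) : ℤ) := by omega
      have := mul_le_mul_of_nonneg_left hkn (Nat.cast_nonneg (∑ t, u t))
      have := hψ u hu h0
      zify
      push_cast at *
      linarith
    · have := hcong u hu0 hu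
      rw [if_pos hus] at this
      exact this
  intro j hj1 hjl
  have hsub h : ∑ t, (j - h) t ≤ ∑ t, j t := sum_le_sum fun t _ => Nat.sub_le _ _
  change _ ∣ padeCombination lam G s (R + fhat) j - binomialShift fhat psi j ∧
    (binomialShift fhat psi j ≠ 0 → ((binomialShift fhat psi j).natDegree : ℤ) < _)
  refine ⟨?_, natDegree_binomialShift_lt hfhat fun h hh => hψ _ ((hsub h).trans hjl)⟩
  rw [padeCombination_add, binomialShift_sub]
  refine dvd_binomialShift _ fun h _ => ?_
  by_cases hus : ∑ t, (j - h) t < s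
  · rw [Pi.sub_apply, hexact _ hus ((hsub h).trans hjl), sub_self]
    exact dvd_zero _
  · have := hcong (j - h) (by omega) ((hsub h).trans hjl)
    rw [if_neg hus] at this
    rw [if_neg (by have := hsub h; omega)]
    exact this

/-- Theorem 4 of the paper (shift-invariance of Padé solutions under adding a codeword):
if `((λ_i), (ψ_j))` is a solution of the Hermite–Padé problem for the interpolation
polynomials `R`, then `((λ_i), (ψ̂_j))` with `ψ̂_j := ∑_{h ⪯ j} C(j,h)·f̂^h·ψ_{j-h}`
(and `ψ_0 := λ_0`) is a solution of the problem for `R̂ := R + f̂`. -/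
theorem pade_solution_shift_invariance (F : Type*) [Field F] [Fintype F]
    (n k m : ℕ) (hk : k < n) (hm : 1 ≤ m)
    (α : Fin n → F) (hα : Function.Injective α)
    (G : Polynomial F) (hG : G = ∏ i : Fin n, (X - C (α i)))
    (R : Fin m → Polynomial F) (hRdeg : ∀ t, (R t).degree < (n : ℕ))
    (s ℓ τ : ℕ) (hs : 0 < s) (hsℓ : s ≤ ℓ) (hτ : 0 < τ)
    (lam psi : (Fin m → ℕ) → Polynomial F)
    (hlamdeg : ∀ i : Fin m → ℕ, ∑ t, i t < s → lam i ≠ 0 →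
      ((lam i).natDegree : ℤ) < (τ : ℤ) * s - (∑ t, i t) + 1)
    (hcong : ∀ j : Fin m → ℕ, 1 ≤ ∑ t, j t → ∑ t, j t ≤ ℓ →
      (if (∑ t, j t) < s then (X : Polynomial F) ^ (τ * s + (∑ t, j t) * (n - 1) + 1)
        else G ^ s) ∣
        (∑ i ∈ (Finset.Iic j).filter (fun i => ∑ t, i t < s),
          lam i * (((∏ t, (j t).choose (i t) : ℕ) : Polynomial F) *
            (∏ t, R t ^ (j t - i t)) * G ^ (∑ t, i t)) - psi j))
    (hpsideg : ∀ j : Fin m → ℕ, 1 ≤ ∑ t, j t → ∑ t, j t ≤ ℓ → psi j ≠ 0 →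
      ((psi j).natDegree : ℤ) < (τ : ℤ) * s + (∑ t, j t) * ((k : ℤ) - 1) + 1)
    (fhat : Fin m → Polynomial F) (hfhat : ∀ t, (fhat t).degree < (k : ℕ))
    (hpsi0 : psi 0 = lam 0) :
    ∀ j : Fin m → ℕ, 1 ≤ ∑ t, j t → ∑ t, j t ≤ ℓ →
      ((if (∑ t, j t) < s then (X : Polynomial F) ^ (τ * s + (∑ t, j t) * (n - 1) + 1)
        else G ^ s) ∣
        (∑ i ∈ (Finset.Iic j).filter (fun i => ∑ t, i t < s),
          lam i * (((∏ t, (j t).choose (i t) : ℕ) : Polynomial F) *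
            (∏ t, (R t + fhat t) ^ (j t - i t)) * G ^ (∑ t, i t)) -
          ∑ h ∈ Finset.Iic j,
            ((∏ t, (j t).choose (h t) : ℕ) : Polynomial F) *
              (∏ t, fhat t ^ h t) * psi (j - h))) ∧
      ((∑ h ∈ Finset.Iic j,
          ((∏ t, (j t).choose (h t) : ℕ) : Polynomial F) *
            (∏ t, fhat t ^ h t) * psi (j - h)) ≠ 0 →
        (((∑ h ∈ Finset.Iic j,
            ((∏ t, (j t).choose (h t) : ℕ) : Polynomial F) *
              (∏ t, fhat t ^ h t) * psi (j - h)).natDegree : ℤ) <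
          (τ : ℤ) * s + (∑ t, j t) * ((k : ℤ) - 1) + 1)) :=
  pade_solution_shift_invariance_general F n k m hk α G hG R hRdeg s ℓ τ hs lam psi hlamdeg hcong
    hpsideg fhat hfhat hpsi0
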